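/- arXiv:2402.16625 — 2 statements merged into one kernel-verified Lean document; each statement's English description precedes it below -/
import Mathlib

section
/- Let 0 < t < 1, u real, and λ a partition with at most n nonzero parts. Then the dual Hall-Littlewood polynomial satisfies Q_λ(u, ut, ..., ut^{n−1}; 0, t) = u^{|λ|} t^{n(λ)} (t;t)_n / (t;t)_{n−ℓ(λ)}. -/
open Finset

/-- Conjugate partition, 0-indexed: `conj f i = λ'_{i+1} = #{j : f j ≥ i+1}`. -/
noncomputable def conj (f : ℕ → ℕ) (i : ℕ) : ℕ := Nat.card {j : ℕ | i + 1 ≤ f j}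

/-- `|λ| = Σ_i λ_i`. -/
noncomputable def psize (f : ℕ → ℕ) : ℕ := ∑ᶠ i, f i

/-- `n(λ) = Σ_{i ≥ 1} (i-1)·λ_i`, written with 0-indexed parts. -/
noncomputable def nstat (f : ℕ → ℕ) : ℕ := ∑ᶠ i, i * f i

/-- An integer partition: a weakly decreasing, eventually zero sequence of naturals. -/
def IsPartition (f : ℕ → ℕ) : Prop := Antitone f ∧ ∃ N, ∀ i ≥ N, f i = 0

/-- q-Pochhammer symbol `(a;q)_n`. -/
def qPoch (a q : ℝ) (n : ℕ) : ℝ := ∏ k ∈ Finset.range n, (1 - a * q ^ k)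

/-- q-binomial coefficient `[a choose b]_q`. -/
noncomputable def qBinom (q : ℝ) (a b : ℕ) : ℝ := qPoch q q a / (qPoch q q b * qPoch q q (a - b))

/-- The abelian p-group `G_λ = ⊕_i ℤ/p^{λ_i}ℤ`. -/
abbrev GrpP (p : ℕ) (f : ℕ → ℕ) : Type := DirectSum ℕ (fun i => ZMod (p ^ f i))

/-- The number of surjective additive group homomorphisms `A → B`. -/
noncomputable def numSur (A B : Type) [AddCommGroup A] [AddCommGroup B] : ℕ :=
  Nat.card {φ : A →+ B // Function.Surjective φ}

/-- `v_m(t) = Π_{k=1}^m (1−t^k)/(1−t)`. -/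
noncomputable def vFactor (t : ℝ) (m : ℕ) : ℝ := ∏ k ∈ Finset.range m, (1 - t ^ (k + 1)) / (1 - t)

/-- The normalization `v_λ(t) = v_{m_0}(t) Π_{i≥1} v_{m_i(λ)}(t)` with `m_0 = n − ℓ(λ)`. -/
noncomputable def vlam (n : ℕ) (t : ℝ) (lam : ℕ → ℕ) : ℝ :=
  vFactor t (n - conj lam 0) * ∏ᶠ i : ℕ, vFactor t (conj lam i - conj lam (i + 1))

/-- The Hall-Littlewood polynomial in `n` variables,
`P_λ(x; 0, t) = v_λ(t)⁻¹ Σ_{σ ∈ S_n} σ(x^λ Π_{i<j} (x_i − t x_j)/(x_i − x_j))`. -/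
noncomputable def hlPoly (n : ℕ) (t : ℝ) (lam : ℕ → ℕ) (x : Fin n → ℝ) : ℝ :=
  (1 / vlam n t lam) *
    ∑ σ : Equiv.Perm (Fin n),
      (∏ i : Fin n, x (σ i) ^ lam (i : ℕ)) *
        ∏ i : Fin n, ∏ j : Fin n,
          if (i : ℕ) < (j : ℕ) then (x (σ i) - t * x (σ j)) / (x (σ i) - x (σ j)) else 1

/-- The dual Hall-Littlewood polynomial `Q_λ = b_λ(t) P_λ`, where
`b_λ(t) = ⟨P_λ, P_λ⟩⁻¹ = Π_{i≥1} (t;t)_{m_i(λ)}`. -/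
noncomputable def hlQPoly (n : ℕ) (t : ℝ) (lam : ℕ → ℕ) (x : Fin n → ℝ) : ℝ :=
  (∏ᶠ i : ℕ, qPoch t t (conj lam i - conj lam (i + 1))) * hlPoly n t lam x



private lemma nat_telescope (c : ℕ → ℕ) (hc : ∀ i, c (i + 1) ≤ c i) (m : ℕ) :
    ∑ i ∈ Finset.range m, (c i - c (i + 1)) = c 0 - c m := by
  induction m with
  | zero => simp
  | succ m ih =>
    rw [Finset.sum_range_succ, ih]
    have h1 : c (m + 1) ≤ c m := hc m
    have h2 : c m ≤ c 0 := by
      clear ih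
      induction m with
      | zero => exact le_rfl
      | succ k ihk => exact le_trans (hc k) (ihk (hc k))
    omega

private lemma perm_adj {n : ℕ} (σ : Equiv.Perm (Fin n)) (hσ : σ ≠ 1) :
    ∃ i j : Fin n, (i : ℕ) < (j : ℕ) ∧ (σ i : ℕ) = (σ j : ℕ) + 1 := by
  classical
  set s : Finset (Fin n) := Finset.univ.filter fun k : Fin n => σ k ≠ k with hs
  have hne : s.Nonempty := by
    by_contra h
    rw [Finset.not_nonempty_iff_eq_empty, hs, Finset.filter_eq_empty_iff] at h
    exact hσ (Equiv.ext fun k => by simpa using h (Finset.mem_univ k))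
  set j := s.max' hne with hjdef
  have hjmem : j ∈ s := s.max'_mem hne
  have hj : σ j ≠ j := (Finset.mem_filter.mp hjmem).2
  have hfix : ∀ k : Fin n, j < k → σ k = k := by
    intro k hk
    by_contra h
    have hmem : k ∈ s := Finset.mem_filter.mpr ⟨Finset.mem_univ _, h⟩
    exact absurd (s.le_max' k hmem) (not_le.mpr hk)
  have hle : σ j < j := by
    rcases lt_trichotomy (σ j) j with h | h | h
    · exact h
    · exact absurd h hj
    · exact absurd (σ.injective (hfix (σ j) h)) hj
  have hw : (σ j : ℕ) + 1 < n := lt_of_le_of_lt (Nat.succ_le_of_lt hle) j.isLt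
  set w : Fin n := ⟨(σ j : ℕ) + 1, hw⟩ with hwdef
  set i := σ.symm w with hidef
  have hsi : σ i = w := σ.apply_symm_apply w
  have hij : i ≠ j := by
    intro h
    rw [h] at hsi
    have := congrArg Fin.val hsi
    simp [hwdef] at this
  have hilt : i < j := by
    rcases lt_or_gt_of_ne hij with h | h
    · exact h
    · exfalso
      have hfi : σ i = i := hfix i h
      have : (i : ℕ) = (σ j : ℕ) + 1 := by
        rw [hfi] at hsi
        exact (congrArg Fin.val hsi).symm ▸ rfl
      have hjn : (σ j : ℕ) < (j : ℕ) := hle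
      have hji : (j : ℕ) < (i : ℕ) := h
      omega
  exact ⟨i, j, hilt, by rw [hsi]⟩

private lemma telescope_prod (t : ℝ) (hc : (1 : ℝ) - t ≠ 0)
    (hfac : ∀ k : ℕ, (1 : ℝ) - t ^ (k + 1) ≠ 0) (m : ℕ) :
    ∏ k ∈ Finset.range m, ((1 - t ^ (k + 2)) / (1 - t ^ (k + 1)))
      = (1 - t ^ (m + 1)) / (1 - t) := by
  induction m with
  | zero => simp [pow_one, div_self hc]
  | succ m ih =>
    rw [Finset.prod_range_succ, ih, div_mul_div_comm, mul_comm (1 - t^(m+1)) (1 - t^(m+2)),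
      mul_comm (1 - t) (1 - t^(m+1))]
    rw [mul_comm (1 - t^(m+2)) (1 - t^(m+1))] at *
    rw [mul_div_mul_left _ _ (hfac m)]

private lemma col_prod (t : ℝ) (htne : t ≠ 0) (hc : (1 : ℝ) - t ≠ 0)
    (hfac : ∀ k : ℕ, (1 : ℝ) - t ^ (k + 1) ≠ 0) (m : ℕ) :
    ∏ i ∈ Finset.range m, ((t ^ i - t ^ (m + 1)) / (t ^ i - t ^ m))
      = (1 - t ^ (m + 1)) / (1 - t) := by
  rw [← Finset.prod_range_reflect]
  have heach : ∀ k ∈ Finset.range m,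
      (t ^ (m - 1 - k) - t ^ (m + 1)) / (t ^ (m - 1 - k) - t ^ m)
        = (1 - t ^ (k + 2)) / (1 - t ^ (k + 1)) := by
    intro k hk
    rw [Finset.mem_range] at hk
    have h1 : t ^ (m + 1) = t ^ (m - 1 - k) * t ^ (k + 2) := by
      rw [← pow_add]; congr 1; omega
    have h2 : t ^ m = t ^ (m - 1 - k) * t ^ (k + 1) := by
      rw [← pow_add]; congr 1; omega
    rw [h1, h2,
      show t ^ (m-1-k) - t ^ (m-1-k) * t ^ (k+2) = t ^ (m-1-k) * (1 - t ^ (k+2)) from by ring,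
      show t ^ (m-1-k) - t ^ (m-1-k) * t ^ (k+1) = t ^ (m-1-k) * (1 - t ^ (k+1)) from by ring,
      mul_div_mul_left _ _ (pow_ne_zero _ htne)]
  rw [Finset.prod_congr rfl heach, telescope_prod t hc hfac m]

private lemma grid_prod (t : ℝ) (htne : t ≠ 0) (hc : (1 : ℝ) - t ≠ 0)
    (hfac : ∀ k : ℕ, (1 : ℝ) - t ^ (k + 1) ≠ 0) (m : ℕ) :
    (∏ i ∈ Finset.range m, ∏ j ∈ Finset.range m,
        if i < j then (t ^ i - t ^ (j + 1)) / (t ^ i - t ^ j) else 1)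
      = ∏ k ∈ Finset.range m, ((1 - t ^ (k + 1)) / (1 - t)) := by
  induction m with
  | zero => simp
  | succ m ih =>
    rw [Finset.prod_range_succ]
    have hlast : (∏ j ∈ Finset.range (m + 1),
        if m < j then (t ^ m - t ^ (j + 1)) / (t ^ m - t ^ j) else 1) = 1 := by
      apply Finset.prod_eq_one
      intro j hj
      rw [Finset.mem_range] at hj
      rw [if_neg (by omega)]
    rw [hlast, mul_one]
    have hsplit : ∀ i ∈ Finset.range m,
        (∏ j ∈ Finset.range (m + 1), if i < j then (t ^ i - t ^ (j + 1)) / (t ^ i - t ^ j) else 1)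
          = (∏ j ∈ Finset.range m, if i < j then (t ^ i - t ^ (j + 1)) / (t ^ i - t ^ j) else 1)
            * ((t ^ i - t ^ (m + 1)) / (t ^ i - t ^ m)) := by
      intro i hi
      rw [Finset.mem_range] at hi
      rw [Finset.prod_range_succ, if_pos hi]
    rw [Finset.prod_congr rfl hsplit, Finset.prod_mul_distrib, ih,
      col_prod t htne hc hfac m, Finset.prod_range_succ]
private lemma conj_card (lam : ℕ → ℕ) (N : ℕ) (hN : ∀ j, N ≤ j → lam j = 0) (i : ℕ) :
    conj lam i = ((Finset.range N).filter fun j => i + 1 ≤ lam j).card := by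
  have hset : {j : ℕ | i + 1 ≤ lam j}
      = (((Finset.range N).filter fun j => i + 1 ≤ lam j : Finset ℕ) : Set ℕ) := by
    ext j
    simp only [Set.mem_setOf_eq, Finset.coe_filter, Finset.mem_range, Set.mem_setOf_eq]
    constructor
    · intro h
      refine ⟨?_, h⟩
      by_contra hn
      have := hN j (le_of_not_gt hn)
      omega
    · exact fun h => h.2
  rw [conj, hset, Nat.card_coe_set_eq, Set.ncard_coe_finset]

/-- `Q_λ(u, ut, …, ut^{n−1}; 0, t) = u^{|λ|} t^{n(λ)} (t;t)_n / (t;t)_{n−ℓ(λ)}`. -/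
theorem hlQ_principal_specialization (n : ℕ) (t u : ℝ) (ht0 : 0 < t) (ht1 : t < 1)
    (hu : u ≠ 0) (lam : ℕ → ℕ) (hlam : IsPartition lam) (hlen : conj lam 0 ≤ n) :
    hlQPoly n t lam (fun i => u * t ^ (i : ℕ)) =
      u ^ psize lam * t ^ nstat lam * qPoch t t n / qPoch t t (n - conj lam 0) := by
  classical
  obtain ⟨hanti, N, hN⟩ := hlam
  have htne : t ≠ 0 := ne_of_gt ht0
  have hcne : (1 : ℝ) - t ≠ 0 := by linarith
  have hfac : ∀ k : ℕ, (1 : ℝ) - t ^ (k + 1) ≠ 0 := by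
    intro k
    have h : t ^ (k + 1) < 1 := pow_lt_one₀ (le_of_lt ht0) ht1 (by omega)
    linarith
  have hqne : ∀ m : ℕ, qPoch t t m ≠ 0 := by
    intro m
    rw [qPoch]
    apply Finset.prod_ne_zero_iff.2
    intro k _
    rw [← pow_succ']
    exact hfac k
  -- lam vanishes from n on
  have hzero : ∀ j, n ≤ j → lam j = 0 := by
    intro j hj
    by_contra h
    have h1 : 1 ≤ lam j := Nat.one_le_iff_ne_zero.2 h
    have hsub : Finset.range (n + 1) ⊆ (Finset.range N).filter fun k => 0 + 1 ≤ lam k := by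
      intro k hk
      rw [Finset.mem_range] at hk
      have hlamk : 1 ≤ lam k := le_trans h1 (hanti (le_trans (by omega : k ≤ n) hj))
      rw [Finset.mem_filter, Finset.mem_range]
      refine ⟨?_, by omega⟩
      by_contra hn2
      have := hN k (le_of_not_gt hn2)
      omega
    have hcard := Finset.card_le_card hsub
    rw [Finset.card_range] at hcard
    rw [conj_card lam N hN 0] at hlen
    omega
  -- conj facts
  have hconj_anti : ∀ i, conj lam (i + 1) ≤ conj lam i := by
    intro i
    rw [conj_card lam N hN, conj_card lam N hN]
    apply Finset.card_le_card
    intro j hj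
    rw [Finset.mem_filter] at *
    exact ⟨hj.1, by omega⟩
  set M := lam 0 with hMdef
  have hconjM : ∀ i, M ≤ i → conj lam i = 0 := by
    intro i hi
    rw [conj_card lam N hN]
    rw [Finset.card_eq_zero, Finset.filter_eq_empty_iff]
    intro j _
    have : lam j ≤ lam 0 := hanti (Nat.zero_le j)
    omega
  have hd0 : ∀ i, M ≤ i → conj lam i - conj lam (i + 1) = 0 := by
    intro i hi
    rw [hconjM i hi]
    exact Nat.zero_sub _
  have hdsum : ∑ i ∈ Finset.range M, (conj lam i - conj lam (i + 1)) = conj lam 0 := by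
    rw [nat_telescope _ hconj_anti M, hconjM M le_rfl, Nat.sub_zero]
  -- finprod/finsum reductions
  have hBf : (∏ᶠ i : ℕ, qPoch t t (conj lam i - conj lam (i + 1)))
      = ∏ i ∈ Finset.range M, qPoch t t (conj lam i - conj lam (i + 1)) := by
    apply finprod_eq_prod_of_mulSupport_subset
    intro i hi
    rw [Function.mem_mulSupport] at hi
    rw [Finset.coe_range, Set.mem_Iio]
    by_contra hmem
    rw [hd0 i (le_of_not_gt hmem)] at hi
    exact hi (by simp [qPoch])
  have hVf : (∏ᶠ i : ℕ, vFactor t (conj lam i - conj lam (i + 1)))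
      = ∏ i ∈ Finset.range M, vFactor t (conj lam i - conj lam (i + 1)) := by
    apply finprod_eq_prod_of_mulSupport_subset
    intro i hi
    rw [Function.mem_mulSupport] at hi
    rw [Finset.coe_range, Set.mem_Iio]
    by_contra hmem
    rw [hd0 i (le_of_not_gt hmem)] at hi
    exact hi (by simp [vFactor])
  have hpsize : psize lam = ∑ i ∈ Finset.range n, lam i := by
    apply finsum_eq_sum_of_support_subset
    intro i hi
    rw [Function.mem_support] at hi
    rw [Finset.coe_range, Set.mem_Iio]
    by_contra h
    exact hi (hzero i (le_of_not_gt h))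
  have hnstat : nstat lam = ∑ i ∈ Finset.range n, i * lam i := by
    apply finsum_eq_sum_of_support_subset
    intro i hi
    rw [Function.mem_support] at hi
    rw [Finset.coe_range, Set.mem_Iio]
    by_contra h
    rw [hzero i (le_of_not_gt h), Nat.mul_zero] at hi
    exact hi rfl
  -- vFactor as qPoch quotient
  have hvF : ∀ m : ℕ, vFactor t m = qPoch t t m / (1 - t) ^ m := by
    intro m
    rw [vFactor, qPoch, Finset.prod_div_distrib, Finset.prod_const, Finset.card_range]
    congr 1
    apply Finset.prod_congr rfl
    intro k _
    rw [pow_succ']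
  -- evaluate the permutation sum
  simp only [hlQPoly, hlPoly, vlam]
  rw [Finset.sum_eq_single_of_mem (1 : Equiv.Perm (Fin n)) (Finset.mem_univ _) ?hother]
  case hother =>
    intro σ _ hσ
    obtain ⟨i0, j0, hlt, heq⟩ := perm_adj σ hσ
    apply mul_eq_zero_of_right
    apply Finset.prod_eq_zero (Finset.mem_univ i0)
    apply Finset.prod_eq_zero (Finset.mem_univ j0)
    rw [if_pos hlt]
    rw [heq, pow_succ]
    rw [show u * (t ^ ((σ j0 : ℕ)) * t) - t * (u * t ^ ((σ j0 : ℕ))) = 0 from by ring, zero_div]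
  -- identity permutation: monomial and the telescoping product
  simp only [Equiv.Perm.one_apply]
  have hmono : (∏ i : Fin n, (u * t ^ ((i : ℕ))) ^ lam (i : ℕ))
      = u ^ psize lam * t ^ nstat lam := by
    rw [hpsize, hnstat, Fin.prod_univ_eq_prod_range (fun k => (u * t ^ k) ^ lam k) n,
      ← Finset.prod_pow_eq_pow_sum, ← Finset.prod_pow_eq_pow_sum, ← Finset.prod_mul_distrib]
    apply Finset.prod_congr rfl
    intro k _
    rw [mul_pow, ← pow_mul]
  have hgrid : (∏ i : Fin n, ∏ j : Fin n,
      if (i : ℕ) < (j : ℕ) then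
        (u * t ^ ((i : ℕ)) - t * (u * t ^ ((j : ℕ)))) / (u * t ^ ((i : ℕ)) - u * t ^ ((j : ℕ)))
      else 1) = qPoch t t n / (1 - t) ^ n := by
    have step1 : ∀ i : Fin n, (∏ j : Fin n,
        if (i : ℕ) < (j : ℕ) then
          (u * t ^ ((i : ℕ)) - t * (u * t ^ ((j : ℕ)))) / (u * t ^ ((i : ℕ)) - u * t ^ ((j : ℕ)))
        else 1)
        = ∏ j ∈ Finset.range n,
          if (i : ℕ) < j then
            (u * t ^ ((i : ℕ)) - t * (u * t ^ j)) / (u * t ^ ((i : ℕ)) - u * t ^ j)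
          else 1 := by
      intro i
      exact Fin.prod_univ_eq_prod_range (fun j =>
        if (i : ℕ) < j then (u * t ^ ((i : ℕ)) - t * (u * t ^ j)) / (u * t ^ ((i : ℕ)) - u * t ^ j)
        else 1) n
    rw [Finset.prod_congr rfl (fun i _ => step1 i),
      Fin.prod_univ_eq_prod_range (fun i => ∏ j ∈ Finset.range n,
        if i < j then (u * t ^ i - t * (u * t ^ j)) / (u * t ^ i - u * t ^ j) else 1) n]
    have hfac2 : ∀ i ∈ Finset.range n, ∀ j ∈ Finset.range n,
        (if i < j then (u * t ^ i - t * (u * t ^ j)) / (u * t ^ i - u * t ^ j) else 1)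
          = (if i < j then (t ^ i - t ^ (j + 1)) / (t ^ i - t ^ j) else 1) := by
      intro i _ j _
      split_ifs with h
      · rw [show u * t ^ i - t * (u * t ^ j) = u * (t ^ i - t ^ (j + 1)) from by
            rw [pow_succ]; ring,
          show u * t ^ i - u * t ^ j = u * (t ^ i - t ^ j) from by ring,
          mul_div_mul_left _ _ hu]
      · rfl
    rw [Finset.prod_congr rfl (fun i hi => Finset.prod_congr rfl (hfac2 i hi)),
      grid_prod t htne hcne hfac n, ← hvF n, vFactor]
  rw [hmono, hgrid, hBf, hVf]
  -- remaining pure algebra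
  have hVprod : (∏ i ∈ Finset.range M, vFactor t (conj lam i - conj lam (i + 1)))
      = (∏ i ∈ Finset.range M, qPoch t t (conj lam i - conj lam (i + 1)))
        / (1 - t) ^ conj lam 0 := by
    rw [Finset.prod_congr rfl (fun i _ => hvF (conj lam i - conj lam (i + 1))),
      Finset.prod_div_distrib, Finset.prod_pow_eq_pow_sum, hdsum]
  rw [hVprod, hvF (n - conj lam 0)]
  set B := ∏ i ∈ Finset.range M, qPoch t t (conj lam i - conj lam (i + 1)) with hBdef
  have hBne : B ≠ 0 := Finset.prod_ne_zero_iff.2 fun i _ => hqne _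
  have hpow : ((1 : ℝ) - t) ^ (n - conj lam 0) * (1 - t) ^ conj lam 0 = (1 - t) ^ n := by
    rw [← pow_add, Nat.sub_add_cancel hlen]
  rw [← hpow]
  set a := ((1 : ℝ) - t) ^ (n - conj lam 0) with hadef
  set b := ((1 : ℝ) - t) ^ conj lam 0 with hbdef
  have hane : a ≠ 0 := pow_ne_zero _ hcne
  have hbne : b ≠ 0 := pow_ne_zero _ hcne
  have hQne : qPoch t t (n - conj lam 0) ≠ 0 := hqne _
  field_simp
end

section
/- Let p be prime, t = 1/p, and μ, ν partitions with μ' ≻ ν' (the conjugates interlace: μ'_1 ≥ ν'_1 ≥ μ'_2 ≥ ν'_2 ≥ ...). Then P_ν(t, t², ...; 0, t) · Q_{μ'/ν'}(−t; t, 0) · Q_μ(1, t, t², ...; 0, t) = (−1)^{|μ|−|ν|} t^{n(ν)+n(μ)+|μ|} / Π_{i≥1} ((t;t)_{μ'_i − ν'_i} (t;t)_{ν'_i − μ'_{i+1}}). -/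
open Finset

/-- The principally specialized skew Hall-Littlewood symmetric function
`P_{λ/μ}(u, ut, ut², …; 0, t)` (valid for `μ ⊆ λ`), given by its explicit product formula. -/
noncomputable def hlSkewGeom (t u : ℝ) (lam mu : ℕ → ℕ) : ℝ :=
  u ^ (psize lam - psize mu) *
    ∏ᶠ i : ℕ,
      (t ^ Nat.choose (conj lam i - conj mu i) 2 *
        qBinom t (conj lam i - conj mu (i + 1)) (conj lam i - conj mu i) *
        qPoch t t (conj mu i - conj mu (i + 1)) / qPoch t t (conj lam i - conj lam (i + 1)))

open Classical in
/-- The single-variable skew q-Whittaker function `Q_{μ'/ν'}(x; t, 0)`: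
it equals `x^{|μ|−|ν|} (t;t)_{μ'_1−ν'_1}^{-1} Π_{i≥1} [ν'_i − ν'_{i+1} choose ν'_i − μ'_{i+1}]_t`
when the conjugates interlace (`μ' ≻ ν'`), and `0` otherwise. -/
noncomputable def qwQskew1 (t x : ℝ) (mu nu : ℕ → ℕ) : ℝ :=
  if ∀ i, conj nu i ≤ conj mu i ∧ conj mu (i + 1) ≤ conj nu i then
    x ^ (psize mu - psize nu) * (1 / qPoch t t (conj mu 0 - conj nu 0)) *
      ∏ᶠ i : ℕ, qBinom t (conj nu i - conj nu (i + 1)) (conj nu i - conj mu (i + 1))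
  else 0

/-- The principally specialized dual Hall-Littlewood function
`Q_μ(u, ut, ut², …; 0, t) = b_μ(t) P_μ(u, ut, …; 0, t)`. -/
noncomputable def hlQGeom (t u : ℝ) (mu : ℕ → ℕ) : ℝ :=
  (∏ᶠ i : ℕ, qPoch t t (conj mu i - conj mu (i + 1))) * hlSkewGeom t u mu (fun _ => 0)

lemma qPoch_pos {t : ℝ} (h0 : 0 < t) (h1 : t < 1) (n : ℕ) : 0 < qPoch t t n := by
  apply Finset.prod_pos
  intro k _
  have h2 : t * t ^ k = t ^ (k + 1) := by ring
  have h3 : t ^ (k + 1) < 1 := pow_lt_one₀ h0.le h1 (by omega)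
  rw [h2]; linarith

lemma qPoch_zero (a q : ℝ) : qPoch a q 0 = 1 := by simp [qPoch]

lemma qBinom_self {t : ℝ} (h0 : 0 < t) (h1 : t < 1) (a : ℕ) : qBinom t a a = 1 := by
  rw [qBinom, Nat.sub_self, qPoch_zero, mul_one, div_self (ne_of_gt (qPoch_pos h0 h1 a))]

lemma conj_eq_card (f : ℕ → ℕ) (N : ℕ) (hN : ∀ j ≥ N, f j = 0) (i : ℕ) :
    conj f i = ((Finset.range N).filter (fun j => i + 1 ≤ f j)).card := by
  have hset : {j : ℕ | i + 1 ≤ f j} =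
      ↑((Finset.range N).filter (fun j => i + 1 ≤ f j)) := by
    ext j
    simp only [Set.mem_setOf_eq, Finset.coe_filter, Finset.mem_range, Set.mem_setOf_eq]
    constructor
    · intro h
      refine ⟨?_, h⟩
      by_contra hj
      push_neg at hj
      have := hN j hj
      omega
    · tauto
  rw [conj, hset, Nat.card_coe_set_eq, Set.ncard_coe_finset]

lemma conj_filter (f : ℕ → ℕ) (hf : Antitone f) (N : ℕ) (hN : ∀ j ≥ N, f j = 0) (i : ℕ) :
    (Finset.range N).filter (fun j => i + 1 ≤ f j) = Finset.range (conj f i) := by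
  set S := (Finset.range N).filter (fun j => i + 1 ≤ f j) with hS
  have hcard : conj f i = S.card := conj_eq_card f N hN i
  have hsub : S ⊆ Finset.range (conj f i) := by
    intro j hj
    simp only [hS, Finset.mem_filter, Finset.mem_range] at hj
    have hsub2 : Finset.range (j + 1) ⊆ S := by
      intro k hk
      simp only [Finset.mem_range] at hk
      simp only [hS, Finset.mem_filter, Finset.mem_range]
      exact ⟨by omega, le_trans hj.2 (hf (by omega))⟩
    have := Finset.card_le_card hsub2
    simp only [Finset.card_range] at this
    simp only [Finset.mem_range]
    omega
  exact Finset.eq_of_subset_of_card_le hsub (by simp [← hcard])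

lemma lt_conj_iff (f : ℕ → ℕ) (hf : Antitone f) (N : ℕ) (hN : ∀ j ≥ N, f j = 0)
    (i j : ℕ) : j < conj f i ↔ i + 1 ≤ f j := by
  have h := conj_filter f hf N hN i
  constructor
  · intro h1
    have hj : j ∈ Finset.range (conj f i) := Finset.mem_range.2 h1
    rw [← h, Finset.mem_filter] at hj
    exact hj.2
  · intro h2
    have hjN : j < N := by
      by_contra hj
      push_neg at hj
      have := hN j hj
      omega
    have hj : j ∈ Finset.range (conj f i) := by
      rw [← h, Finset.mem_filter, Finset.mem_range]
      exact ⟨hjN, h2⟩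
    exact Finset.mem_range.1 hj

lemma conj_zero_of_ge (f : ℕ → ℕ) (hf : IsPartition f) (i : ℕ) (hi : f 0 ≤ i) :
    conj f i = 0 := by
  obtain ⟨ha, N, hN⟩ := hf
  by_contra h
  have := (lt_conj_iff f ha N hN i 0).1 (by omega)
  omega

lemma psize_eq_sum_conj (f : ℕ → ℕ) (hf : IsPartition f) (M : ℕ) (hM : f 0 ≤ M) :
    psize f = ∑ i ∈ Finset.range M, conj f i := by
  obtain ⟨ha, N, hN⟩ := hf
  have h1 : psize f = ∑ j ∈ Finset.range N, f j := by
    apply finsum_eq_sum_of_support_subset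
    intro j hj
    simp only [Function.mem_support] at hj
    simp only [Finset.coe_range, Set.mem_Iio]
    by_contra h
    push_neg at h
    exact hj (hN j h)
  rw [h1]
  have key : ∀ j ∈ Finset.range N, f j = ∑ i ∈ Finset.range M, (if i + 1 ≤ f j then 1 else 0) := by
    intro j _
    rw [← Finset.sum_filter]
    have hfil : (Finset.range M).filter (fun i => i + 1 ≤ f j) = Finset.range (f j) := by
      have hfj : f j ≤ M := le_trans (ha (Nat.zero_le j)) hM
      ext i
      simp only [Finset.mem_filter, Finset.mem_range]
      omega
    rw [hfil, Finset.sum_const, Finset.card_range, smul_eq_mul, mul_one]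
  rw [Finset.sum_congr rfl key, Finset.sum_comm]
  apply Finset.sum_congr rfl
  intro i _
  rw [← Finset.sum_filter]
  have : (Finset.range N).filter (fun j => i + 1 ≤ f j) = Finset.range (conj f i) :=
    conj_filter f ha N hN i
  rw [this, Finset.sum_const, Finset.card_range, smul_eq_mul, mul_one]

lemma nstat_eq_sum_choose (f : ℕ → ℕ) (hf : IsPartition f) (M : ℕ) (hM : f 0 ≤ M) :
    nstat f = ∑ i ∈ Finset.range M, Nat.choose (conj f i) 2 := by
  obtain ⟨ha, N, hN⟩ := hf
  have h1 : nstat f = ∑ j ∈ Finset.range N, j * f j := by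
    apply finsum_eq_sum_of_support_subset
    intro j hj
    simp only [Function.mem_support] at hj
    simp only [Finset.coe_range, Set.mem_Iio]
    by_contra h
    push_neg at h
    rw [hN j h, mul_zero] at hj
    exact hj rfl
  rw [h1]
  have key : ∀ j ∈ Finset.range N,
      j * f j = ∑ i ∈ Finset.range M, (if i + 1 ≤ f j then j else 0) := by
    intro j _
    rw [← Finset.sum_filter]
    have hfil : (Finset.range M).filter (fun i => i + 1 ≤ f j) = Finset.range (f j) := by
      have hfj : f j ≤ M := le_trans (ha (Nat.zero_le j)) hM
      ext i
      simp only [Finset.mem_filter, Finset.mem_range]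
      omega
    rw [hfil, Finset.sum_const, Finset.card_range, smul_eq_mul, mul_comm]
  rw [Finset.sum_congr rfl key, Finset.sum_comm]
  apply Finset.sum_congr rfl
  intro i _
  rw [← Finset.sum_filter]
  have hfil : (Finset.range N).filter (fun j => i + 1 ≤ f j) = Finset.range (conj f i) :=
    conj_filter f ha N hN i
  rw [hfil]
  have h2 := Finset.sum_range_id_mul_two (conj f i)
  have h3 := Nat.choose_two_right (conj f i)
  omega

lemma conj_zero_fun (i : ℕ) : conj (fun _ => 0) i = 0 := by
  have : {j : ℕ | i + 1 ≤ (fun _ => 0) j} = ∅ := by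
    ext j; simp
  rw [conj, this]
  simp

lemma psize_zero_fun : psize (fun _ => 0) = 0 := by
  simp [psize]

/-- for `μ' ≻ ν'`,
`P_ν(t,t²,…;0,t) · Q_{μ'/ν'}(−t;t,0) · Q_μ(1,t,t²,…;0,t)
 = (−1)^{|μ|−|ν|} t^{n(ν)+n(μ)+|μ|} / Π_{i≥1}((t;t)_{μ'_i−ν'_i}(t;t)_{ν'_i−μ'_{i+1}})` at `t = 1/p`. -/
theorem hl_qw_product_formula (p : ℕ) (hp : p.Prime) (t : ℝ) (ht : t = (p : ℝ)⁻¹)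
    (mu nu : ℕ → ℕ) (hmu : IsPartition mu) (hnu : IsPartition nu)
    (hint : ∀ i, conj nu i ≤ conj mu i ∧ conj mu (i + 1) ≤ conj nu i) :
    hlSkewGeom t t nu (fun _ => 0) * qwQskew1 t (-t) mu nu * hlQGeom t 1 mu =
      (-1 : ℝ) ^ (psize mu - psize nu) * t ^ (nstat nu + nstat mu + psize mu) /
        ∏ᶠ i : ℕ,
          (qPoch t t (conj mu i - conj nu i) * qPoch t t (conj nu i - conj mu (i + 1))) := by
  have hp2 : 2 ≤ p := hp.two_le
  have hple : (2 : ℝ) ≤ (p : ℝ) := by exact_mod_cast hp2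
  have ht0 : 0 < t := by rw [ht]; apply inv_pos.2; linarith
  have ht1 : t < 1 := by
    rw [ht]
    rw [inv_lt_one_iff₀]
    right; linarith
  set B := max (mu 0) (nu 0) with hB
  have hm0 : ∀ i, B ≤ i → conj mu i = 0 := fun i hi =>
    conj_zero_of_ge mu hmu i (le_trans (le_max_left _ _) hi)
  have hn0 : ∀ i, B ≤ i → conj nu i = 0 := fun i hi =>
    conj_zero_of_ge nu hnu i (le_trans (le_max_right _ _) hi)
  have hq : ∀ k, qPoch t t k ≠ 0 := fun k => ne_of_gt (qPoch_pos ht0 ht1 k)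
  set PN := ∏ i ∈ Finset.range B, qPoch t t (conj nu i - conj nu (i + 1)) with hPNdef
  set PA := ∏ i ∈ Finset.range B, qPoch t t (conj mu i - conj nu i) with hPAdef
  set PB := ∏ i ∈ Finset.range B, qPoch t t (conj nu i - conj mu (i + 1)) with hPBdef
  set PM := ∏ i ∈ Finset.range B, qPoch t t (conj mu i - conj mu (i + 1)) with hPMdef
  have hPN : PN ≠ 0 := Finset.prod_ne_zero_iff.2 fun i _ => hq _
  have hPA : PA ≠ 0 := Finset.prod_ne_zero_iff.2 fun i _ => hq _
  have hPB : PB ≠ 0 := Finset.prod_ne_zero_iff.2 fun i _ => hq _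
  have hPM : PM ≠ 0 := Finset.prod_ne_zero_iff.2 fun i _ => hq _
  -- Factor 1
  have L1 : hlSkewGeom t t nu (fun _ => 0) = t ^ (psize nu + nstat nu) / PN := by
    rw [hlSkewGeom, psize_zero_fun, Nat.sub_zero]
    simp only [conj_zero_fun, Nat.sub_zero, Nat.sub_self, qPoch_zero, mul_one,
      qBinom_self ht0 ht1]
    have hfp : (∏ᶠ i, (t ^ (conj nu i).choose 2 / qPoch t t (conj nu i - conj nu (i + 1))))
        = ∏ i ∈ Finset.range B,
            (t ^ (conj nu i).choose 2 / qPoch t t (conj nu i - conj nu (i + 1))) := by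
      apply finprod_eq_prod_of_mulSupport_subset
      intro i hi
      simp only [Function.mem_mulSupport] at hi
      simp only [Finset.coe_range, Set.mem_Iio]
      by_contra hiB
      push_neg at hiB
      apply hi
      rw [hn0 i hiB, hn0 (i + 1) (by omega)]
      simp [qPoch_zero]
    rw [hfp, Finset.prod_div_distrib, Finset.prod_pow_eq_pow_sum,
      ← nstat_eq_sum_choose nu hnu B (le_max_right _ _), pow_add]
    ring
  -- Factor 3
  have L3 : hlQGeom t 1 mu = t ^ nstat mu := by
    rw [hlQGeom, hlSkewGeom, psize_zero_fun, Nat.sub_zero, one_pow, one_mul]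
    simp only [conj_zero_fun, Nat.sub_zero, Nat.sub_self, qPoch_zero, mul_one,
      qBinom_self ht0 ht1]
    have h1 : (∏ᶠ i, qPoch t t (conj mu i - conj mu (i + 1))) = PM := by
      apply finprod_eq_prod_of_mulSupport_subset
      intro i hi
      simp only [Function.mem_mulSupport] at hi
      simp only [Finset.coe_range, Set.mem_Iio]
      by_contra hiB
      push_neg at hiB
      apply hi
      rw [hm0 i hiB, hm0 (i + 1) (by omega)]
      simp [qPoch_zero]
    have h2 : (∏ᶠ i, (t ^ (conj mu i).choose 2 / qPoch t t (conj mu i - conj mu (i + 1))))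
        = ∏ i ∈ Finset.range B,
            (t ^ (conj mu i).choose 2 / qPoch t t (conj mu i - conj mu (i + 1))) := by
      apply finprod_eq_prod_of_mulSupport_subset
      intro i hi
      simp only [Function.mem_mulSupport] at hi
      simp only [Finset.coe_range, Set.mem_Iio]
      by_contra hiB
      push_neg at hiB
      apply hi
      rw [hm0 i hiB, hm0 (i + 1) (by omega)]
      simp [qPoch_zero]
    rw [h1, h2, Finset.prod_div_distrib, Finset.prod_pow_eq_pow_sum,
      ← nstat_eq_sum_choose mu hmu B (le_max_left _ _), mul_comm, div_mul_cancel₀ _ hPM]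
  -- Factor 2
  have L2 : qwQskew1 t (-t) mu nu = (-t) ^ (psize mu - psize nu) * (PN / (PA * PB)) := by
    rw [qwQskew1, if_pos hint]
    have hfp : (∏ᶠ i, qBinom t (conj nu i - conj nu (i + 1)) (conj nu i - conj mu (i + 1)))
        = ∏ i ∈ Finset.range B,
            qBinom t (conj nu i - conj nu (i + 1)) (conj nu i - conj mu (i + 1)) := by
      apply finprod_eq_prod_of_mulSupport_subset
      intro i hi
      simp only [Function.mem_mulSupport] at hi
      simp only [Finset.coe_range, Set.mem_Iio]
      by_contra hiB
      push_neg at hiB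
      apply hi
      rw [hn0 i hiB, hn0 (i + 1) (by omega), hm0 (i + 1) (by omega)]
      simpa using qBinom_self ht0 ht1 0
    have hterm : ∀ i ∈ Finset.range B,
        qBinom t (conj nu i - conj nu (i + 1)) (conj nu i - conj mu (i + 1))
          = qPoch t t (conj nu i - conj nu (i + 1)) /
              (qPoch t t (conj nu i - conj mu (i + 1)) *
                qPoch t t (conj mu (i + 1) - conj nu (i + 1))) := by
      intro i _
      have hsub : (conj nu i - conj nu (i + 1)) - (conj nu i - conj mu (i + 1))
          = conj mu (i + 1) - conj nu (i + 1) := by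
        have h1 := (hint i).2
        have h2 := (hint (i + 1)).1
        omega
      rw [qBinom, hsub]
    rw [hfp, Finset.prod_congr rfl hterm, Finset.prod_div_distrib, Finset.prod_mul_distrib]
    have hPAs : PA = (∏ i ∈ Finset.range B, qPoch t t (conj mu (i + 1) - conj nu (i + 1))) *
        qPoch t t (conj mu 0 - conj nu 0) := by
      rw [← Finset.prod_range_succ' (fun i => qPoch t t (conj mu i - conj nu i)) B,
        Finset.prod_range_succ, hm0 B le_rfl, hn0 B le_rfl]
      simp [qPoch_zero]
      exact hPAdef
    have hshift : (∏ i ∈ Finset.range B, qPoch t t (conj mu (i + 1) - conj nu (i + 1))) ≠ 0 :=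
      Finset.prod_ne_zero_iff.2 fun i _ => hq _
    rw [hPAs]
    rw [← hPNdef, ← hPBdef]
    field_simp
  -- RHS denominator
  have hRHS : (∏ᶠ i, (qPoch t t (conj mu i - conj nu i) *
      qPoch t t (conj nu i - conj mu (i + 1)))) = PA * PB := by
    have h1 : (∏ᶠ i, (qPoch t t (conj mu i - conj nu i) *
        qPoch t t (conj nu i - conj mu (i + 1))))
        = ∏ i ∈ Finset.range B, (qPoch t t (conj mu i - conj nu i) *
            qPoch t t (conj nu i - conj mu (i + 1))) := by
      apply finprod_eq_prod_of_mulSupport_subset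
      intro i hi
      simp only [Function.mem_mulSupport] at hi
      simp only [Finset.coe_range, Set.mem_Iio]
      by_contra hiB
      push_neg at hiB
      apply hi
      rw [hm0 i hiB, hn0 i hiB, hm0 (i + 1) (by omega)]
      simp [qPoch_zero]
    rw [h1, Finset.prod_mul_distrib]
  rw [L1, L2, L3, hRHS]
  have hd : psize nu ≤ psize mu := by
    rw [psize_eq_sum_conj nu hnu B (le_max_right _ _),
      psize_eq_sum_conj mu hmu B (le_max_left _ _)]
    exact Finset.sum_le_sum fun i _ => (hint i).1
  have hexp : nstat nu + nstat mu + psize mu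
      = psize nu + nstat nu + (psize mu - psize nu) + nstat mu := by omega
  rw [hexp, neg_pow]
  field_simp
  ring
end
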